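/- arXiv:1503.06022 — 2 statements merged into one kernel-verified Lean document; each statement's English description precedes it below -/
import Mathlib

section
/- Suppose two labelled transition systems L₁ (on states with labels (g,ψ)) and L₂ (labels (g_φ,γ)) are related by: transitions of L₂ map to transitions of L₁ via (g_φ, γ) ↦ (g, γ∘φ), and for every g and every ψ : g_L → x into a mixture x there exist unique φ in the refinement family and γ with ψ = γ∘φ. Then this map is a bijection between the transitions of L₂ from any state x and the transitions of L₁ from x; in particular the reachability relations of L₁ and L₂ coincide. -/
open CategoryTheory

/-- The refined transition system is in bijection with the original one,
and the induced step (hence reachability) relations coincide. -/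
theorem stmt_8 {C : Type*} [Category C] (Mix : C → Prop)
    {G : Type*} (L : G → C)
    {I : G → Type*} (t : ∀ g, I g → C) (φ : ∀ g (i : I g), L g ⟶ t g i)
    (href : ∀ (g : G) (x : C), Mix x → ∀ ψ : L g ⟶ x,
      ∃! p : Σ i : I g, t g i ⟶ x, φ g p.1 ≫ p.2 = ψ) :
    (∀ x : C, Mix x →
      Function.Bijective
        (fun e : (Σ g : G, Σ i : I g, t g i ⟶ x) =>
          (⟨e.1, φ e.1 e.2.1 ≫ e.2.2⟩ : Σ g : G, (L g ⟶ x)))) ∧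
    (∀ res : ∀ (g : G) (x : C), (L g ⟶ x) → C,
      (fun x y => Mix x ∧ ∃ (g : G) (ψ : L g ⟶ x), res g x ψ = y)
        = (fun x y => Mix x ∧ ∃ (g : G) (i : I g) (γ : t g i ⟶ x),
            res g x (φ g i ≫ γ) = y) ∧
      Relation.ReflTransGen
          (fun x y => Mix x ∧ ∃ (g : G) (ψ : L g ⟶ x), res g x ψ = y)
        = Relation.ReflTransGen
          (fun x y => Mix x ∧ ∃ (g : G) (i : I g) (γ : t g i ⟶ x),
            res g x (φ g i ≫ γ) = y)) := by
  constructor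
  · intro x hx
    constructor
    · rintro ⟨g, i, γ⟩ ⟨g', i', γ'⟩ h
      obtain ⟨rfl, h2⟩ : g = g' ∧ HEq (φ g i ≫ γ) (φ g' i' ≫ γ') := by
        simpa [Sigma.ext_iff] using h
      have h2' : φ g i ≫ γ = φ g i' ≫ γ' := eq_of_heq h2
      obtain ⟨p, hp, hu⟩ := href g x hx (φ g i ≫ γ)
      have e1 := hu ⟨i, γ⟩ rfl
      have e2 := hu ⟨i', γ'⟩ h2'.symm
      have : (⟨i, γ⟩ : Σ i : I g, t g i ⟶ x) = ⟨i', γ'⟩ := e1.trans e2.symm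
      simpa [Sigma.ext_iff] using this
    · rintro ⟨g, ψ⟩
      obtain ⟨⟨i, γ⟩, hp, _⟩ := href g x hx ψ
      exact ⟨⟨g, i, γ⟩, by simpa using hp⟩
  · intro res
    have heq : (fun x y => Mix x ∧ ∃ (g : G) (ψ : L g ⟶ x), res g x ψ = y)
        = (fun x y => Mix x ∧ ∃ (g : G) (i : I g) (γ : t g i ⟶ x),
            res g x (φ g i ≫ γ) = y) := by
      funext x y
      apply propext
      constructor
      · rintro ⟨hx, g, ψ, hy⟩
        obtain ⟨⟨i, γ⟩, hp, _⟩ := href g x hx ψ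
        exact ⟨hx, g, i, γ, by rwa [hp]⟩
      · rintro ⟨hx, g, i, γ, hy⟩
        exact ⟨hx, g, φ g i ≫ γ, hy⟩
    exact ⟨heq, by rw [heq]⟩
end

section
/- In an undirected graph where each vertex has one of three types (1, 2, 3) and edges only connect vertices of consecutive types cyclically (1–2, 2–3, 3–1), and each vertex has at most one neighbour of each other type, every finite connected component is either a simple path or a cycle whose length is a multiple of 3. -/
open SimpleGraph

/-- Path case: if some vertex in the component has no predecessor, the component
is a path graph. -/
private theorem lemA {V : Type*} [Fintype V] [DecidableEq V]
    (G : SimpleGraph V) (τ : V → ZMod 3)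
    (hadj : ∀ u v, G.Adj u v → τ v = τ u + 1 ∨ τ u = τ v + 1)
    (hsucc : ∀ u v w, G.Adj u v → G.Adj u w →
      τ v = τ u + 1 → τ w = τ u + 1 → v = w)
    (hpred : ∀ u v w, G.Adj u v → G.Adj u w →
      τ u = τ v + 1 → τ u = τ w + 1 → v = w)
    (v u0 : V) (hr : G.Reachable v u0)
    (h0 : ∀ x, G.Adj u0 x → τ u0 ≠ τ x + 1) :
    ∃ n : ℕ,
      Nonempty ((G.induce {w | G.Reachable v w}) ≃g SimpleGraph.pathGraph n) := by
  classical
  set succF : V → V := fun w =>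
    if h : ∃ x, G.Adj w x ∧ τ x = τ w + 1 then h.choose else w with hsuccF
  have hspec : ∀ w, (∃ x, G.Adj w x ∧ τ x = τ w + 1) →
      G.Adj w (succF w) ∧ τ (succF w) = τ w + 1 := by
    intro w h
    simp only [hsuccF, dif_pos h]
    exact h.choose_spec
  set g : ℕ → V := fun i => succF^[i] u0 with hg
  have g0 : g 0 = u0 := rfl
  set HS : ℕ → Prop := fun i => ∃ x, G.Adj (g i) x ∧ τ x = τ (g i) + 1 with hHS
  have hstep : ∀ i, HS i →
      G.Adj (g i) (g (i + 1)) ∧ τ (g (i + 1)) = τ (g i) + 1 := by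
    intro i h
    have := hspec (g i) h
    rwa [show g (i + 1) = succF (g i) from Function.iterate_succ_apply' _ _ _]
  -- cancellation / injectivity
  have cancel : ∀ i j, (∀ m, m < i → HS m) → (∀ m, m < j → HS m) →
      g i = g j → i = j := by
    intro i
    induction i with
    | zero =>
      intro j _ hj2 hgj
      cases j with
      | zero => rfl
      | succ j' =>
        exfalso
        have h1 := hstep j' (hj2 j' (Nat.lt_succ_self _))
        have hadjj : G.Adj u0 (g j') := by
          rw [← g0, hgj]; exact h1.1.symm
        exact h0 (g j') hadjj (by rw [← g0, hgj]; exact h1.2)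
    | succ i' ih =>
      intro j h1 h2 heq
      cases j with
      | zero =>
        exfalso
        have ha := hstep i' (h1 i' (Nat.lt_succ_self _))
        have hadjj : G.Adj u0 (g i') := by
          rw [← g0, ← heq]; exact ha.1.symm
        exact h0 (g i') hadjj (by rw [← g0, ← heq]; exact ha.2)
      | succ j' =>
        have a1 := hstep i' (h1 i' (Nat.lt_succ_self _))
        have a2 := hstep j' (h2 j' (Nat.lt_succ_self _))
        rw [← heq] at a2
        have : g i' = g j' :=
          hpred (g (i' + 1)) (g i') (g j') a1.1.symm a2.1.symm a1.2 a2.2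
        have := ih j' (fun m hm => h1 m (hm.trans (Nat.lt_succ_self _)))
          (fun m hm => h2 m (hm.trans (Nat.lt_succ_self _))) this
        omega
  have hterm : ∃ m, ¬ HS m := by
    by_contra h
    push_neg at h
    have hinj : Function.Injective g := fun i j hij =>
      cancel i j (fun m _ => h m) (fun m _ => h m) hij
    obtain ⟨i, j, hne, he⟩ := Finite.exists_ne_map_eq_of_infinite g
    exact hne (hinj he)
  set n : ℕ := Nat.find hterm with hn
  have hnspec : ¬ HS n := Nat.find_spec hterm
  have hlt : ∀ m, m < n → HS m := fun m hm => not_not.mp (Nat.find_min hterm hm)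
  -- reachability of the orbit
  have reachU : ∀ i, i ≤ n → G.Reachable v (g i) := by
    intro i
    induction i with
    | zero => intro _; exact hr
    | succ i ih =>
      intro h
      exact (ih (Nat.le_of_succ_le h)).trans
        ((hstep i (hlt i (Nat.lt_of_succ_le h))).1.reachable)
  -- coverage
  have cover : ∀ w, G.Reachable u0 w → ∃ i, i ≤ n ∧ g i = w := by
    intro w hw
    rw [SimpleGraph.reachable_iff_reflTransGen] at hw
    induction hw with
    | refl => exact ⟨0, Nat.zero_le _, rfl⟩
    | @tail b c h1 h2 ih =>
      obtain ⟨i, hi, rfl⟩ := ih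
      rcases hadj _ _ h2 with hc | hc
      · have hiHS : HS i := ⟨_, h2, hc⟩
        have hin : i ≠ n := fun h => hnspec (h ▸ hiHS)
        have hi' : i < n := lt_of_le_of_ne hi hin
        have hs := hstep i hiHS
        have hce : c = g (i + 1) := hsucc (g i) _ _ h2 hs.1 hc hs.2
        exact ⟨i + 1, hi', hce.symm⟩
      · cases i with
        | zero => exact absurd hc (h0 _ h2)
        | succ i' =>
          have hs := hstep i' (hlt i' (Nat.lt_of_succ_le hi))
          have hce : c = g i' :=
            hpred (g (i' + 1)) c (g i') h2 hs.1.symm hc hs.2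
          exact ⟨i', by omega, hce.symm⟩
  -- the equivalence
  refine ⟨n + 1, ⟨?_⟩⟩
  let e : Fin (n + 1) → {w | G.Reachable v w} :=
    fun i => ⟨g i, reachU i (Nat.lt_succ_iff.mp i.isLt)⟩
  have einj : Function.Injective e := by
    intro i j h
    have hgij : g i = g j := congrArg Subtype.val h
    have := cancel i j (fun m hm => hlt m (by omega))
      (fun m hm => hlt m (by omega)) hgij
    exact Fin.ext this
  have esurj : Function.Surjective e := by
    rintro ⟨w, hw⟩
    obtain ⟨i, hi, rfl⟩ := cover w (hr.symm.trans hw)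
    exact ⟨⟨i, Nat.lt_succ_of_le hi⟩, rfl⟩
  have hA : ∀ i j : Fin (n + 1),
      (G.induce {w | G.Reachable v w}).Adj (e i) (e j) ↔
        (SimpleGraph.pathGraph (n + 1)).Adj i j := by
    intro i j
    rw [SimpleGraph.pathGraph_adj]
    have hind : (G.induce {w | G.Reachable v w}).Adj (e i) (e j) ↔
        G.Adj (g i) (g j) := by
      exact Iff.rfl
    rw [hind]
    constructor
    · intro h
      rcases hadj _ _ h with hc | hc
      · left
        have hiHS : HS i.val := ⟨_, h, hc⟩
        have hin : (i : ℕ) ≠ n := fun hh => hnspec (hh ▸ hiHS)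
        have hi' : (i : ℕ) < n := lt_of_le_of_ne (Nat.lt_succ_iff.mp i.isLt) hin
        have hs := hstep i hiHS
        have hce : g j.val = g (i.val + 1) := hsucc (g i) _ _ h hs.1 hc hs.2
        have := cancel j.val (i.val + 1) (fun m hm => hlt m (by omega))
          (fun m hm => hlt m (by omega)) hce
        omega
      · right
        have hiHS : HS j.val := ⟨_, h.symm, hc⟩
        have hin : (j : ℕ) ≠ n := fun hh => hnspec (hh ▸ hiHS)
        have hj' : (j : ℕ) < n := lt_of_le_of_ne (Nat.lt_succ_iff.mp j.isLt) hin
        have hs := hstep j hiHS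
        have hce : g i.val = g (j.val + 1) := hsucc (g j) _ _ h.symm hs.1 hc hs.2
        have := cancel i.val (j.val + 1) (fun m hm => hlt m (by omega))
          (fun m hm => hlt m (by omega)) hce
        omega
    · intro h
      rcases h with h | h
      · have hi' : (i : ℕ) < n := by omega
        have := (hstep i (hlt i hi')).1
        rwa [h] at this
      · have hj' : (j : ℕ) < n := by omega
        have := (hstep j (hlt j hj')).1
        rw [h] at this
        exact this.symm
  exact
    (SimpleGraph.Iso.symm
      { toEquiv := Equiv.ofBijective e ⟨einj, esurj⟩
        map_rel_iff' := fun {i j} => hA i j })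

/-- Cycle case: if every vertex in the component has both a successor and a
predecessor, the component is a cycle of length a multiple of 3. -/
private theorem lemB {V : Type*} [Fintype V] [DecidableEq V]
    (G : SimpleGraph V) (τ : V → ZMod 3)
    (hadj : ∀ u v, G.Adj u v → τ v = τ u + 1 ∨ τ u = τ v + 1)
    (hsucc : ∀ u v w, G.Adj u v → G.Adj u w →
      τ v = τ u + 1 → τ w = τ u + 1 → v = w)
    (hpred : ∀ u v w, G.Adj u v → G.Adj u w →
      τ u = τ v + 1 → τ u = τ w + 1 → v = w)
    (v : V)
    (hBs : ∀ w, G.Reachable v w → ∃ x, G.Adj w x ∧ τ x = τ w + 1) :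
    ∃ k : ℕ,
      Nonempty ((G.induce {w | G.Reachable v w}) ≃g
        SimpleGraph.cycleGraph (3 * k)) := by
  classical
  set succF : V → V := fun w =>
    if h : ∃ x, G.Adj w x ∧ τ x = τ w + 1 then h.choose else w with hsuccF
  have hspec : ∀ w, (∃ x, G.Adj w x ∧ τ x = τ w + 1) →
      G.Adj w (succF w) ∧ τ (succF w) = τ w + 1 := by
    intro w h
    simp only [hsuccF, dif_pos h]
    exact h.choose_spec
  set g : ℕ → V := fun i => succF^[i] v with hg
  have g0 : g 0 = v := rfl
  have reach : ∀ i, G.Reachable v (g i) := by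
    intro i
    induction i with
    | zero => exact .refl v
    | succ i ih =>
      have h := hspec (g i) (hBs _ ih)
      have : g (i + 1) = succF (g i) := Function.iterate_succ_apply' _ _ _
      rw [this]
      exact ih.trans h.1.reachable
  have hstep : ∀ i,
      G.Adj (g i) (g (i + 1)) ∧ τ (g (i + 1)) = τ (g i) + 1 := by
    intro i
    have := hspec (g i) (hBs _ (reach i))
    rwa [show g (i + 1) = succF (g i) from Function.iterate_succ_apply' _ _ _]
  have cancel : ∀ i j, i ≤ j → g i = g j → v = g (j - i) := by
    intro i
    induction i with
    | zero => intro j _ h; simpa [← g0] using h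
    | succ i' ih =>
      intro j hij heq
      cases j with
      | zero => omega
      | succ j' =>
        have a1 := hstep i'
        have a2 := hstep j'
        rw [← heq] at a2
        have : g i' = g j' :=
          hpred (g (i' + 1)) (g i') (g j') a1.1.symm a2.1.symm a1.2 a2.2
        have := ih j' (by omega) this
        simpa [Nat.succ_sub_succ] using this
  have exPeriod : ∃ m, 0 < m ∧ g m = v := by
    obtain ⟨i, j, hne, he⟩ := Finite.exists_ne_map_eq_of_infinite g
    rcases Nat.lt_or_ge i j with h | h
    · exact ⟨j - i, by omega, (cancel i j h.le he).symm⟩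
    · have h' : j < i := lt_of_le_of_ne h (fun hh => hne hh.symm)
      exact ⟨i - j, by omega, (cancel j i h'.le he.symm).symm⟩
  set k : ℕ := Nat.find exPeriod with hkdef
  have hk : 0 < k ∧ g k = v := Nat.find_spec exPeriod
  have kmin : ∀ m, 0 < m → m < k → g m ≠ v := by
    intro m hm hmk hgm
    exact Nat.find_min exPeriod hmk ⟨hm, hgm⟩
  have inj : ∀ i j, i < k → j < k → g i = g j → i = j := by
    have key : ∀ i j, i < j → j < k → g i ≠ g j := by
      intro i j hij hjk he
      have := cancel i j hij.le he
      exact kmin (j - i) (by omega) (by omega) this.symm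
    intro i j hi hj he
    rcases Nat.lt_trichotomy i j with h | h | h
    · exact absurd he (key i j h hj)
    · exact h
    · exact absurd he.symm (key j i h hi)
  have period : ∀ m, g (m + k) = g m := by
    intro m
    show succF^[m + k] v = succF^[m] v
    rw [Function.iterate_add_apply]
    exact congrArg _ hk.2
  have periodMul : ∀ q m, g (m + q * k) = g m := by
    intro q
    induction q with
    | zero => intro m; simp
    | succ q ih =>
      intro m
      have h1 : m + (q + 1) * k = (m + q * k) + k := by ring
      rw [h1, period, ih]
  have gmod : ∀ m, g (m % k) = g m := by
    intro m
    conv_rhs => rw [← Nat.mod_add_div' m k]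
    exact (periodMul (m / k) (m % k)).symm
  have cover : ∀ w, G.Reachable v w → ∃ i, i < k ∧ g i = w := by
    intro w hw
    rw [SimpleGraph.reachable_iff_reflTransGen] at hw
    induction hw with
    | refl => exact ⟨0, hk.1, rfl⟩
    | @tail b c h1 h2 ih =>
      obtain ⟨i, hi, rfl⟩ := ih
      rcases hadj _ _ h2 with hc | hc
      · have hs := hstep i
        have hce : c = g (i + 1) := hsucc (g i) _ _ h2 hs.1 hc hs.2
        refine ⟨(i + 1) % k, Nat.mod_lt _ hk.1, ?_⟩
        rw [gmod, hce]
      · -- c is a predecessor of g i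
        have hik : i + k - 1 + 1 = i + k := by omega
        have hs := hstep (i + k - 1)
        rw [hik, period] at hs
        have hce : c = g (i + k - 1) :=
          hpred (g i) c (g (i + k - 1)) h2 hs.1.symm hc hs.2
        refine ⟨(i + k - 1) % k, Nat.mod_lt _ hk.1, ?_⟩
        rw [gmod, hce]
  have htau : ∀ i : ℕ, τ (g i) = τ v + (i : ZMod 3) := by
    intro i
    induction i with
    | zero => simp [g0]
    | succ i ih =>
      have := (hstep i).2
      rw [this, ih]
      push_cast
      ring
  have hdvd : 3 ∣ k := by
    have h1 := htau k
    rw [hk.2] at h1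
    have h2 : ((k : ℕ) : ZMod 3) = 0 := (left_eq_add.mp h1)
    exact (ZMod.natCast_eq_zero_iff k 3).mp h2
  obtain ⟨m, hkm⟩ := hdvd
  have hk3 : 3 ≤ k := by omega
  haveI : NeZero k := ⟨by omega⟩
  have hone : (1 : Fin k).val = 1 := by
    rw [Fin.val_one']
    exact Nat.mod_eq_of_lt (by omega)
  -- the equivalence
  let e : Fin k → {w | G.Reachable v w} := fun i => ⟨g i, reach i⟩
  have einj : Function.Injective e := by
    intro i j h
    have hgij : g i = g j := congrArg Subtype.val h
    exact Fin.ext (inj i j i.isLt j.isLt hgij)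
  have esurj : Function.Surjective e := by
    rintro ⟨w, hw⟩
    obtain ⟨i, hi, rfl⟩ := cover w hw
    exact ⟨⟨i, hi⟩, rfl⟩
  -- adjacency helpers
  have hadj1 : ∀ i j : Fin k, j.val = (i.val + 1) % k → G.Adj (g i.val) (g j.val) := by
    intro i j hj
    rw [hj, gmod]
    exact (hstep i.val).1
  have hsub1 : ∀ i j : Fin k, j.val = (i.val + 1) % k → (j - i).val = 1 := by
    intro i j hj
    rw [Fin.sub_def]
    simp only
    rcases Nat.lt_or_ge (i.val + 1) k with h | h
    · rw [Nat.mod_eq_of_lt h] at hj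
      have h2 : k - i.val + j.val = k + 1 := by omega
      rw [h2, Nat.add_mod_left]
      exact Nat.mod_eq_of_lt (by omega)
    · have hik : i.val + 1 = k := by have := i.isLt; omega
      have hj0 : j.val = 0 := by rw [hj, hik, Nat.mod_self]
      have h2 : k - i.val + j.val = 1 := by omega
      rw [h2]
      exact Nat.mod_eq_of_lt (by omega)
  have hsub2 : ∀ i j : Fin k, (j - i).val = 1 → j.val = (i.val + 1) % k := by
    intro i j hj
    have : j - i = 1 := Fin.ext (by rw [hj, hone])
    have hji : j = i + 1 := by
      have := sub_eq_iff_eq_add.mp this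
      rwa [add_comm] at this
    rw [hji, Fin.add_def]
    simp [hone]
  have hA : ∀ i j : Fin k,
      (G.induce {w | G.Reachable v w}).Adj (e i) (e j) ↔
        (SimpleGraph.cycleGraph k).Adj i j := by
    intro i j
    rw [SimpleGraph.cycleGraph_adj']
    have hind : (G.induce {w | G.Reachable v w}).Adj (e i) (e j) ↔
        G.Adj (g i.val) (g j.val) := by
      exact Iff.rfl
    rw [hind]
    constructor
    · intro h
      rcases hadj _ _ h with hc | hc
      · -- g j is the successor of g i : j = i + 1
        have hs := hstep i.val
        have hce : g j.val = g (i.val + 1) := hsucc (g i) _ _ h hs.1 hc hs.2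
        rw [← gmod (i.val + 1)] at hce
        have : j.val = (i.val + 1) % k :=
          inj _ _ j.isLt (Nat.mod_lt _ hk.1) hce
        right
        exact hsub1 i j this
      · -- g i is the successor of g j : i = j + 1
        have hs := hstep j.val
        have hce : g i.val = g (j.val + 1) := hsucc (g j) _ _ h.symm hs.1 hc hs.2
        rw [← gmod (j.val + 1)] at hce
        have : i.val = (j.val + 1) % k :=
          inj _ _ i.isLt (Nat.mod_lt _ hk.1) hce
        left
        exact hsub1 j i this
    · intro h
      rcases h with h | h
      · exact (hadj1 j i (hsub2 j i h)).symm
      · exact hadj1 i j (hsub2 i j h)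
  have iso2 : SimpleGraph.cycleGraph k ≃g
      (G.induce {w | G.Reachable v w}) :=
    { toEquiv := Equiv.ofBijective e ⟨einj, esurj⟩
      map_rel_iff' := fun {i j} => hA i j }
  refine ⟨m, ?_⟩
  rw [← hkm]
  exact ⟨iso2.symm⟩

/-- In a graph with cyclically 3-typed vertices, where edges connect only
consecutive types and each vertex has at most one neighbour of each
adjacent type, every connected component is a path or a cycle of length a
multiple of 3. -/
theorem stmt_17 {V : Type*} [Fintype V] [DecidableEq V]
    (G : SimpleGraph V) (τ : V → ZMod 3)
    (hadj : ∀ u v, G.Adj u v → τ v = τ u + 1 ∨ τ u = τ v + 1)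
    (hsucc : ∀ u v w, G.Adj u v → G.Adj u w →
      τ v = τ u + 1 → τ w = τ u + 1 → v = w)
    (hpred : ∀ u v w, G.Adj u v → G.Adj u w →
      τ u = τ v + 1 → τ u = τ w + 1 → v = w) :
    ∀ v : V,
      (∃ n : ℕ,
        Nonempty ((G.induce {w | G.Reachable v w}) ≃g SimpleGraph.pathGraph n)) ∨
      (∃ k : ℕ,
        Nonempty ((G.induce {w | G.Reachable v w}) ≃g SimpleGraph.cycleGraph (3 * k))) := by
  intro v
  classical
  have key : ∀ a b : ZMod 3, (a = b + 1) ↔ (-b = -a + 1) := by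
    intro a b
    constructor
    · intro h; linear_combination h
    · intro h; linear_combination h
  by_cases hA1 : ∃ u0, G.Reachable v u0 ∧ ∀ x, G.Adj u0 x → τ u0 ≠ τ x + 1
  · obtain ⟨u0, h1, h2⟩ := hA1
    exact Or.inl (lemA G τ hadj hsucc hpred v u0 h1 h2)
  by_cases hA2 : ∃ u0, G.Reachable v u0 ∧ ∀ x, G.Adj u0 x → τ x ≠ τ u0 + 1
  · obtain ⟨u0, h1, h2⟩ := hA2
    refine Or.inl (lemA G (fun w => -τ w) ?_ ?_ ?_ v u0 h1 ?_)
    · intro u w h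
      rcases hadj u w h with hc | hc
      · exact Or.inr ((key _ _).mp hc)
      · exact Or.inl ((key _ _).mp hc)
    · intro u a b h1' h2' h3 h4
      exact hpred u a b h1' h2' ((key _ _).mpr h3) ((key _ _).mpr h4)
    · intro u a b h1' h2' h3 h4
      exact hsucc u a b h1' h2' ((key _ _).mpr h3) ((key _ _).mpr h4)
    · intro x hx h
      exact h2 x hx ((key _ _).mpr h)
  · push_neg at hA1 hA2
    refine Or.inr (lemB G τ hadj hsucc hpred v ?_)
    intro w hw
    obtain ⟨x, hx1, hx2⟩ := hA2 w hw
    exact ⟨x, hx1, hx2⟩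
end
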